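/- Let L ∈ {ALC, ALCI} and let E = (E⁺, E⁻) be a collection of labeled ABox-AQ examples. Then the following are equivalent: (1) E admits no fitting L-ontology; (2) there is a refutation candidate C for E such that Q(a) ∈ C for some (A, Q(a)) ∈ E⁻. -/

import Mathlib

/-!
Formalization background for "Fitting Ontologies to ABox-Query Examples":
description logics ALC / ALCI / ALCQ, ABoxes, interpretations (with standard
names assumption), ontologies, queries (AQ / CQ / full CQ / UCQ), fitting
problems, homomorphisms, forest models, unravelings, etc.
-/

namespace DLFit

/-- Roles: role names and inverse roles (both indexed by natural numbers). -/
inductive DLRole : Type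
  | name (r : ℕ)
  | inv (r : ℕ)
deriving DecidableEq

/-- Concepts of ALCIQ, a common superlanguage of ALC, ALCI and ALCQ. -/
inductive Concept : Type
  | top
  | atom (A : ℕ)
  | neg (C : Concept)
  | inter (C D : Concept)
  | ex (r : DLRole) (C : Concept)
  | atLeast (n : ℕ) (r : DLRole) (C : Concept)
  | atMost (n : ℕ) (r : DLRole) (C : Concept)
deriving DecidableEq

/-- A concept uses no inverse roles. -/
def Concept.invFree : Concept → Prop
  | .top => True
  | .atom _ => True
  | .neg C => C.invFree
  | .inter C D => C.invFree ∧ D.invFree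
  | .ex r C => (∃ m, r = DLRole.name m) ∧ C.invFree
  | .atLeast _ r C => (∃ m, r = DLRole.name m) ∧ C.invFree
  | .atMost _ r C => (∃ m, r = DLRole.name m) ∧ C.invFree

/-- A concept uses no qualified number restrictions. -/
def Concept.countFree : Concept → Prop
  | .top => True
  | .atom _ => True
  | .neg C => C.countFree
  | .inter C D => C.countFree ∧ D.countFree
  | .ex _ C => C.countFree
  | .atLeast _ _ _ => False
  | .atMost _ _ _ => False

/-- An ontology is a finite set of concept inclusions `C ⊑ D`. -/
abbrev Ontology := Finset (Concept × Concept)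

/-- The two ontology languages considered: ALC and ALCI. -/
inductive DL : Type
  | alc
  | alci
deriving DecidableEq

/-- Membership of an ontology in ALC resp. ALCI. -/
def OntologyInLang : DL → Ontology → Prop
  | .alc, O => ∀ ci ∈ O, ci.1.invFree ∧ ci.1.countFree ∧ ci.2.invFree ∧ ci.2.countFree
  | .alci, O => ∀ ci ∈ O, ci.1.countFree ∧ ci.2.countFree

/-- An ALCQ-ontology: no inverse roles (number restrictions allowed). -/
def OntologyIsALCQ (O : Ontology) : Prop := ∀ ci ∈ O, ci.1.invFree ∧ ci.2.invFree

/-- ABox assertions `A(a)` and `r(a,b)`. -/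
inductive Assertion : Type
  | conc (A : ℕ) (a : ℕ)
  | role (r : ℕ) (a b : ℕ)
deriving DecidableEq

/-- An ABox is a finite set of assertions. -/
abbrev ABox := Finset Assertion

def AssertionInds : Assertion → Finset ℕ
  | .conc _ a => {a}
  | .role _ a b => {a, b}

/-- The individual names occurring in an ABox. -/
def ABoxInds (A : ABox) : Finset ℕ := A.biUnion AssertionInds

def AssertionCNs : Assertion → Finset ℕ
  | .conc P _ => {P}
  | .role _ _ _ => ∅

/-- The concept names occurring in an ABox. -/
def ABoxCNs (A : ABox) : Finset ℕ := A.biUnion AssertionCNs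

/-- An interpretation, with the standard names assumption: every individual
name denotes itself, i.e. the (injective) map `indI` embeds the individual
names into the domain. -/
structure Interp : Type 1 where
  Dom : Type
  indI : ℕ → Dom
  indI_inj : Function.Injective indI
  concI : ℕ → Set Dom
  roleI : ℕ → Set (Dom × Dom)

/-- Semantics of (possibly inverse) roles. -/
def Interp.rSem (I : Interp) : DLRole → Set (I.Dom × I.Dom)
  | .name r => I.roleI r
  | .inv r => {p | (p.2, p.1) ∈ I.roleI r}

/-- Semantics of concepts. -/
def Interp.cSem (I : Interp) : Concept → Set I.Dom
  | .top => Set.univ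
  | .atom A => I.concI A
  | .neg C => (I.cSem C)ᶜ
  | .inter C D => I.cSem C ∩ I.cSem D
  | .ex r C => {d | ∃ e, (d, e) ∈ I.rSem r ∧ e ∈ I.cSem C}
  | .atLeast n r C => {d | (n : ℕ∞) ≤ {e | (d, e) ∈ I.rSem r ∧ e ∈ I.cSem C}.encard}
  | .atMost n r C => {d | {e | (d, e) ∈ I.rSem r ∧ e ∈ I.cSem C}.encard ≤ (n : ℕ∞)}

/-- `I` is a model of the ontology `O`. -/
def Interp.IsModelOf (I : Interp) (O : Ontology) : Prop :=
  ∀ ci ∈ O, I.cSem ci.1 ⊆ I.cSem ci.2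

def Interp.SatAssertion (I : Interp) : Assertion → Prop
  | .conc P a => I.indI a ∈ I.concI P
  | .role r a b => (I.indI a, I.indI b) ∈ I.roleI r

/-- `I` is a model of the ABox `A` (individual names interpreted as themselves). -/
def Interp.SatABox (I : Interp) (A : ABox) : Prop := ∀ α ∈ A, I.SatAssertion α

/-- An ABox is consistent with an ontology if they have a common model. -/
def ConsistentWith (A : ABox) (O : Ontology) : Prop :=
  ∃ I : Interp, I.IsModelOf O ∧ I.SatABox A

/-- Homomorphism between ABoxes (need not fix individual names). -/
def ABoxHom (h : ℕ → ℕ) (A B : ABox) : Prop :=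
  (∀ P a, Assertion.conc P a ∈ A → Assertion.conc P (h a) ∈ B) ∧
  (∀ r a b, Assertion.role r a b ∈ A → Assertion.role r (h a) (h b) ∈ B)

/-- Homomorphism from an ABox into an interpretation. -/
def ABoxIHom (I : Interp) (h : ℕ → I.Dom) (A : ABox) : Prop :=
  (∀ P a, Assertion.conc P a ∈ A → h a ∈ I.concI P) ∧
  (∀ r a b, Assertion.role r a b ∈ A → (h a, h b) ∈ I.roleI r)

/-- Local injectivity of a homomorphism on an ABox. -/
def LocInj {D : Type} (h : ℕ → D) (A : ABox) : Prop :=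
  ∀ r a b c, Assertion.role r a b ∈ A → Assertion.role r a c ∈ A → h b = h c → b = c

/-- The ABoxes in a collection of examples have pairwise disjoint individual names. -/
def PairwiseDisjInds (S : Finset ABox) : Prop :=
  ∀ A ∈ S, ∀ B ∈ S, A ≠ B → Disjoint (ABoxInds A) (ABoxInds B)

/-! ## Queries -/

/-- Terms of a query: variables and individual names. -/
inductive Term : Type
  | var (x : ℕ)
  | ind (a : ℕ)
deriving DecidableEq

/-- Atoms of a query. -/
inductive Atom : Type
  | catom (A : ℕ) (t : Term)
  | ratom (r : ℕ) (t t' : Term)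
deriving DecidableEq

/-- A (Boolean) conjunctive query, viewed as its finite set of atoms;
all variables are (implicitly) existentially quantified. -/
abbrev CQ := Finset Atom

/-- A union of conjunctive queries. -/
abbrev UCQ := Finset CQ

def TermInds : Term → Finset ℕ
  | .var _ => ∅
  | .ind a => {a}

def AtomInds : Atom → Finset ℕ
  | .catom _ t => TermInds t
  | .ratom _ t t' => TermInds t ∪ TermInds t'

/-- Individual names occurring in a CQ. -/
def CQInds (q : CQ) : Finset ℕ := q.biUnion AtomInds

def UCQInds (q : UCQ) : Finset ℕ := q.biUnion CQInds

def AtomCNs : Atom → Finset ℕ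
  | .catom P _ => {P}
  | .ratom _ _ _ => ∅

/-- Concept names occurring in a CQ. -/
def CQCNs (q : CQ) : Finset ℕ := q.biUnion AtomCNs

def UCQCNs (q : UCQ) : Finset ℕ := q.biUnion CQCNs

def AtomGround : Atom → Prop
  | .catom _ t => ∃ a, t = Term.ind a
  | .ratom _ t t' => (∃ a, t = Term.ind a) ∧ (∃ a, t' = Term.ind a)

/-- A full CQ: no (existentially quantified) variables. -/
def CQIsFull (q : CQ) : Prop := ∀ α ∈ q, AtomGround α

def TermEval (I : Interp) (v : ℕ → I.Dom) : Term → I.Dom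
  | .var x => v x
  | .ind a => I.indI a

def Interp.SatAtom (I : Interp) (v : ℕ → I.Dom) : Atom → Prop
  | .catom P t => TermEval I v t ∈ I.concI P
  | .ratom r t t' => (TermEval I v t, TermEval I v t') ∈ I.roleI r

/-- `I ⊨ q` for a CQ `q`: there is a (strong) homomorphism of the atoms of `q`
into `I` that is the identity on individual names. -/
def Interp.SatCQ (I : Interp) (q : CQ) : Prop :=
  ∃ v : ℕ → I.Dom, ∀ α ∈ q, I.SatAtom v α

/-- `I ⊨ q` for a UCQ `q`: some disjunct is satisfied. -/
def Interp.SatUCQ (I : Interp) (q : UCQ) : Prop := ∃ p ∈ q, I.SatCQ p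

/-- `A ∪ O ⊨ Q(a)` for an atomic query. -/
def EntailsAQ (A : ABox) (O : Ontology) (Q a : ℕ) : Prop :=
  ∀ I : Interp, I.IsModelOf O → I.SatABox A → I.indI a ∈ I.concI Q

/-- `A ∪ O ⊨ q` for a CQ. -/
def EntailsCQ (A : ABox) (O : Ontology) (q : CQ) : Prop :=
  ∀ I : Interp, I.IsModelOf O → I.SatABox A → I.SatCQ q

/-- `A ∪ O ⊨ q` for a UCQ. -/
def EntailsUCQ (A : ABox) (O : Ontology) (q : UCQ) : Prop :=
  ∀ I : Interp, I.IsModelOf O → I.SatABox A → I.SatUCQ q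

/-! ## Examples and fitting -/

/-- An ABox-AQ example `(𝒜, Q(a))`. -/
abbrev AQEx := ABox × ℕ × ℕ

/-- An ABox-CQ (in particular, ABox-FullCQ) example `(𝒜, q)`. -/
abbrev CQEx := ABox × CQ

/-- An ABox-UCQ example `(𝒜, q)`. -/
abbrev UEx := ABox × UCQ

/-- `O` fits a collection of labeled ABox(-consistency) examples. -/
def FitsCons (O : Ontology) (Ep En : Finset ABox) : Prop :=
  (∀ A ∈ Ep, ConsistentWith A O) ∧ (∀ A ∈ En, ¬ ConsistentWith A O)

/-- `O` fits a collection of labeled ABox-AQ examples. -/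
def FitsAQ (O : Ontology) (Ep En : Finset AQEx) : Prop :=
  (∀ e ∈ Ep, EntailsAQ e.1 O e.2.1 e.2.2) ∧ (∀ e ∈ En, ¬ EntailsAQ e.1 O e.2.1 e.2.2)

/-- `O` fits a collection of labeled ABox-CQ examples. -/
def FitsCQ (O : Ontology) (Ep En : Finset CQEx) : Prop :=
  (∀ e ∈ Ep, EntailsCQ e.1 O e.2) ∧ (∀ e ∈ En, ¬ EntailsCQ e.1 O e.2)

/-- `O` fits a collection of labeled ABox-UCQ examples. -/
def FitsUCQ (O : Ontology) (Ep En : Finset UEx) : Prop :=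
  (∀ e ∈ Ep, EntailsUCQ e.1 O e.2) ∧ (∀ e ∈ En, ¬ EntailsUCQ e.1 O e.2)

/-- An example `(A, q)` is inconsistent if every ALCI-ontology `O` with
`A ∪ O ⊨ q` is inconsistent with `A`. -/
def InconsistentEx (A : ABox) (q : CQ) : Prop :=
  ∀ O : Ontology, OntologyInLang DL.alci O → EntailsCQ A O q → ¬ ConsistentWith A O

/-! ## Completions and refutation candidates -/

/-- The disjoint union `A⁻` of the ABoxes of the negative AQ examples
(the ABoxes of a collection have pairwise disjoint individual names, so the
disjoint union is the plain union). -/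
def NegUnionAQ (En : Finset AQEx) : ABox := En.sup Prod.fst

/-- The disjoint union `A⁻` of the ABoxes of the negative CQ examples. -/
def NegUnionCQ (En : Finset CQEx) : ABox := En.sup Prod.fst

/-- A completion for a collection of ABox-AQ examples: extends `A⁻` by concept
assertions `Q(b)` with `b ∈ ind(A⁻)` and `Q` occurring as an AQ in `E⁺`. -/
def IsCompletionAQ (Ep En : Finset AQEx) (C : ABox) : Prop :=
  NegUnionAQ En ⊆ C ∧
  ∀ α ∈ C, α ∈ NegUnionAQ En ∨
    ∃ Q b, α = Assertion.conc Q b ∧ b ∈ ABoxInds (NegUnionAQ En) ∧ ∃ e ∈ Ep, e.2.1 = Q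

/-- Refutation candidates for a collection of ABox-AQ examples. -/
inductive RefCandAQ (Ep : Finset AQEx) (base : ABox) : ABox → Prop
  | base : RefCandAQ Ep base base
  | step {C : ABox} {A : ABox} {Q a : ℕ} {h : ℕ → ℕ} :
      RefCandAQ Ep base C → (A, Q, a) ∈ Ep → ABoxHom h A C →
      RefCandAQ Ep base (insert (Assertion.conc Q (h a)) C)

/-- A completion for a collection of ABox-FullCQ examples: extends `A⁻` by
concept assertions `Q(b)` with `b ∈ ind(A⁻)` and `Q` occurring in a query of a
positive example. -/
def IsCompletionCQ (Ep En : Finset CQEx) (C : ABox) : Prop :=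
  NegUnionCQ En ⊆ C ∧
  ∀ α ∈ C, α ∈ NegUnionCQ En ∨
    ∃ Q b, α = Assertion.conc Q b ∧ b ∈ ABoxInds (NegUnionCQ En) ∧ ∃ e ∈ Ep, Q ∈ CQCNs e.2

/-- Refutation candidates for a collection of ABox-FullCQ examples. -/
inductive RefCandCQ (Ep : Finset CQEx) (base : ABox) : ABox → Prop
  | base : RefCandCQ Ep base base
  | step {C : ABox} {A : ABox} {q : CQ} {Q a : ℕ} {h : ℕ → ℕ} :
      RefCandCQ Ep base C → (A, q) ∈ Ep → ¬ InconsistentEx A q → ABoxHom h A C →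
      Atom.catom Q (Term.ind a) ∈ q →
      RefCandCQ Ep base (insert (Assertion.conc Q (h a)) C)

/-! ## Forest models, unravelings and `I_{A,h,L}` -/

/-- The edge relation of the graph of a forest model: some role edge, excluding
pairs of ABox individuals. -/
def ForestEdge (I : Interp) (A : ABox) (d e : I.Dom) : Prop :=
  (∃ r, (d, e) ∈ I.roleI r) ∧
  ¬ ∃ a ∈ ABoxInds A, ∃ b ∈ ABoxInds A, d = I.indI a ∧ e = I.indI b

/-- The undirected version of the graph of a forest model. -/
def ForestGraph (I : Interp) (A : ABox) : SimpleGraph I.Dom where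
  Adj d e := d ≠ e ∧ (ForestEdge I A d e ∨ ForestEdge I A e d)
  symm := ⟨fun _ _ h => ⟨h.1.symm, h.2.symm⟩⟩
  loopless := ⟨fun _ h => h.1 rfl⟩

/-- `I` is an `L`-forest model of the ABox `A`:
it is a model of `A`; role edges among ABox individuals are exactly those
asserted in `A`; and the remaining role edges form a forest (for ALC a
directed forest whose edges point away from the roots, for ALCI an
undirected forest). -/
def IsForestModel (L : DL) (I : Interp) (A : ABox) : Prop :=
  I.SatABox A ∧
  (∀ r a b, a ∈ ABoxInds A → b ∈ ABoxInds A →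
    ((I.indI a, I.indI b) ∈ I.roleI r ↔ Assertion.role r a b ∈ A)) ∧
  (match L with
    | DL.alc =>
        (∀ e : I.Dom, {d : I.Dom | ForestEdge I A d e}.Subsingleton) ∧
        WellFounded (fun d e : I.Dom => ForestEdge I A d e)
    | DL.alci =>
        (∀ d : I.Dom, ¬ ForestEdge I A d d) ∧ (ForestGraph I A).IsAcyclic)

/-- `e` is a neighbor of `d` in `I`. -/
def Neighbor (I : Interp) (d e : I.Dom) : Prop :=
  ∃ r, (d, e) ∈ I.roleI r ∨ (e, d) ∈ I.roleI r

/-- The degree of `I` (maximal number of neighbors) is at most `n`. -/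
def DegreeLE (I : Interp) (n : ℕ) : Prop :=
  ∀ d : I.Dom, ∃ s : Finset I.Dom, s.card ≤ n ∧ ∀ e : I.Dom, Neighbor I d e → e ∈ s

/-- The disjoint union of a family of interpretations (`pick` chooses, for
every individual name, the component interpreting it). -/
def Interp.disjUnion {ι : Type} (J : ι → Interp) (pick : ℕ → ι) : Interp where
  Dom := Σ i : ι, (J i).Dom
  indI := fun n => ⟨pick n, (J (pick n)).indI n⟩
  indI_inj := by
    intro m n hmn
    obtain ⟨h1, h2⟩ := Sigma.ext_iff.mp hmn
    dsimp only at h1 h2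
    rw [h1] at h2
    exact (J (pick n)).indI_inj (eq_of_heq h2)
  concI := fun P => {x | x.2 ∈ (J x.1).concI P}
  roleI := fun r => {p | ∃ (i : ι) (d e : (J i).Dom),
    p = (⟨i, d⟩, ⟨i, e⟩) ∧ (d, e) ∈ (J i).roleI r}

/-- `l` is a path in `I` starting at `d` (for `L = ALC`, only role names may
occur on the path; for `L = ALCI` also inverse roles). -/
def IsPathFrom (L : DL) (I : Interp) : I.Dom → List (DLRole × I.Dom) → Prop
  | _, [] => True
  | d, (r, e) :: l =>
      (d, e) ∈ I.rSem r ∧ (L = DL.alc → ∃ m, r = DLRole.name m) ∧ IsPathFrom L I e l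

/-- The tail (last element) of a path starting at `d`. -/
def PathTail (I : Interp) (d : I.Dom) (l : List (DLRole × I.Dom)) : I.Dom :=
  (l.getLast?).elim d Prod.snd

/-- Domain of `I_{A,h,L}`: individual names plus, for every individual name,
paths in `I` (elements not corresponding to `ind(A)` or to valid nonempty
paths are unlabeled and isolated junk). -/
abbrev IAhDom (I : Interp) : Type := ℕ ⊕ (ℕ × List (DLRole × I.Dom))

/-- The element of `I_{A,h,L}` given by the path `l` attached at individual
`a`; the root (empty path) is identified with `a` itself. -/
def IAhNode (I : Interp) (a : ℕ) : List (DLRole × I.Dom) → IAhDom I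
  | [] => Sum.inl a
  | l => Sum.inr (a, l)

/-- Validity of a path attached at `a` in `I_{A,h,L}`. -/
def IAhValid (L : DL) (I : Interp) (A : ABox) (h : ℕ → I.Dom)
    (a : ℕ) (l : List (DLRole × I.Dom)) : Prop :=
  a ∈ ABoxInds A ∧ IsPathFrom L I (h a) l

/-- The interpretation `I_{A,h,L}`: start from the interpretation with domain
`ind(A)`, concept memberships induced from `I` via `h`, and role edges exactly
the role assertions of `A`; then disjointly attach, for every `a ∈ ind(A)`,
the `L`-unraveling of `I` at `h(a)`, identifying its root with `a`. -/
def IAh (L : DL) (I : Interp) (A : ABox) (h : ℕ → I.Dom) : Interp where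
  Dom := IAhDom I
  indI := Sum.inl
  indI_inj := Sum.inl_injective
  concI := fun P => {x : IAhDom I |
    (∃ a, x = Sum.inl a ∧ a ∈ ABoxInds A ∧ h a ∈ I.concI P) ∨
    (∃ a l, x = Sum.inr (a, l) ∧ l ≠ [] ∧ IAhValid L I A h a l ∧
      PathTail I (h a) l ∈ I.concI P)}
  roleI := fun r => {p : IAhDom I × IAhDom I |
    (∃ a b, p.1 = Sum.inl a ∧ p.2 = Sum.inl b ∧ Assertion.role r a b ∈ A) ∨
    (∃ a l e, IAhValid L I A h a (l ++ [(DLRole.name r, e)]) ∧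
      p.1 = IAhNode I a l ∧ p.2 = IAhNode I a (l ++ [(DLRole.name r, e)])) ∨
    (∃ a l e, IAhValid L I A h a (l ++ [(DLRole.inv r, e)]) ∧
      p.1 = IAhNode I a (l ++ [(DLRole.inv r, e)]) ∧ p.2 = IAhNode I a l)}

/-- Restriction of an interpretation to the elements satisfying `P`
(elements outside `P` become unlabeled and isolated). -/
def Interp.restrictP (I : Interp) (P : I.Dom → Prop) : Interp where
  Dom := I.Dom
  indI := I.indI
  indI_inj := I.indI_inj
  concI := fun Q => {d | d ∈ I.concI Q ∧ P d}
  roleI := fun r => {p | p ∈ I.roleI r ∧ P p.1 ∧ P p.2}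

/-- Depth of elements of `I_{A,h,L}` (ABox individuals have depth 0). -/
def IAhDepthLE (I : Interp) (n : ℕ) : IAhDom I → Prop
  | Sum.inl _ => True
  | Sum.inr al => al.2.length ≤ n

/-! ## Sizes -/

/-- Size of a UCQ (number of atoms). -/
def UCQSize (q : UCQ) : ℕ := q.sum Finset.card

/-- Size of an ABox-UCQ example. -/
def UExSize (e : UEx) : ℕ := e.1.card + UCQSize e.2

/-- Size `||E||` of a collection of ABox-UCQ examples. -/
def ESize (Ep En : Finset UEx) : ℕ := Ep.sum UExSize + En.sum UExSize

/-- The (exponential) bound `bound(E)` on the degree: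
`||E⁻||` plus the sum over positive examples `(A,q)` of `(||(A,q)||+1)^{||q||}`. -/
def EBound (Ep En : Finset UEx) : ℕ :=
  En.sum UExSize + Ep.sum (fun e => (UExSize e + 1) ^ UCQSize e.2)

/-! ## Connectivity, components, variations -/

def ABoxAdj (A : ABox) (a b : ℕ) : Prop :=
  ∃ r, Assertion.role r a b ∈ A ∨ Assertion.role r b a ∈ A

/-- Connectivity of individuals in an ABox. -/
def ABoxConn (A : ABox) : ℕ → ℕ → Prop := Relation.ReflTransGen (ABoxAdj A)

/-- `B` is a maximally connected component of the ABox `A`. -/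
def IsComponent (B A : ABox) : Prop :=
  ∃ a ∈ ABoxInds A, ∀ α : Assertion,
    α ∈ B ↔ α ∈ A ∧ ∀ c ∈ AssertionInds α, ABoxConn A a c

def AtomTerms : Atom → Finset Term
  | .catom _ t => {t}
  | .ratom _ t t' => {t, t'}

/-- The terms (variables and individuals) occurring in a CQ. -/
def CQTerms (q : CQ) : Finset Term := q.biUnion AtomTerms

def CQAdj (q : CQ) (t t' : Term) : Prop :=
  ∃ r, Atom.ratom r t t' ∈ q ∨ Atom.ratom r t' t ∈ q

/-- A CQ is connected. -/
def CQConnected (q : CQ) : Prop :=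
  ∀ t ∈ CQTerms q, ∀ t' ∈ CQTerms q, Relation.ReflTransGen (CQAdj q) t t'

def SubstTerm (σ : ℕ → Term) : Term → Term
  | .var x => σ x
  | .ind a => Term.ind a

def SubstAtom (σ : ℕ → Term) : Atom → Atom
  | .catom P t => Atom.catom P (SubstTerm σ t)
  | .ratom r t t' => Atom.ratom r (SubstTerm σ t) (SubstTerm σ t')

/-- An `A`-variation of a CQ `p`: consistently replace zero or more variables by
individual names from `ind(A)` and possibly identify variables. -/
def IsVariation (A : ABox) (p p' : CQ) : Prop :=
  ∃ σ : ℕ → Term,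
    (∀ x : ℕ, (∃ y, σ x = Term.var y) ∨ ∃ a ∈ ABoxInds A, σ x = Term.ind a) ∧
    p' = p.image (SubstAtom σ)

def Assertion.toAtom : Assertion → Atom
  | .conc P a => Atom.catom P (Term.ind a)
  | .role r a b => Atom.ratom r (Term.ind a) (Term.ind b)

/-- The interpretation `I_q` induced by a CQ. -/
def CQInterp (p : CQ) : Interp where
  Dom := Term
  indI := Term.ind
  indI_inj := fun _ _ hab => Term.ind.inj hab
  concI := fun P => {t | Atom.catom P t ∈ p}
  roleI := fun r => {tt | Atom.ratom r tt.1 tt.2 ∈ p}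

/-- A proper `A`-variation. -/
def IsProperVariation (L : DL) (A : ABox) (p p' : CQ) : Prop :=
  IsVariation A p p' ∧
  (∀ r a b, Atom.ratom r (Term.ind a) (Term.ind b) ∈ p' → Assertion.role r a b ∈ A) ∧
  IsForestModel L (CQInterp p') (A.filter fun α => α.toAtom ∈ p')

/-- A weak homomorphism from a CQ into an interpretation (need not be the
identity on individual names). -/
def WeakHom (I : Interp) (g : Term → I.Dom) (p : CQ) : Prop :=
  (∀ P t, Atom.catom P t ∈ p → g t ∈ I.concI P) ∧
  (∀ r t t', Atom.ratom r t t' ∈ p → (g t, g t') ∈ I.roleI r)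

def ReachStep (L : DL) (I : Interp) (d e : I.Dom) : Prop :=
  match L with
  | DL.alc => ∃ r, (d, e) ∈ I.roleI r
  | DL.alci => ∃ r, (d, e) ∈ I.roleI r ∨ (e, d) ∈ I.roleI r

/-- `L`-reachability in an interpretation. -/
def Reach (L : DL) (I : Interp) : I.Dom → I.Dom → Prop :=
  Relation.ReflTransGen (ReachStep L I)

/-- Compatibility of a weak homomorphism `g` (from `p'` to `I`) with a
homomorphism `h` (from `A` to `I`). -/
def CompatibleWith (L : DL) (I : Interp) (A : ABox) (h : ℕ → I.Dom)
    (p' : CQ) (g : Term → I.Dom) : Prop :=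
  (∀ a ∈ CQInds p', g (Term.ind a) = h a) ∧
  (∀ x : ℕ, Term.var x ∈ CQTerms p' →
    ∃ a ∈ ABoxInds A, Reach L I (h a) (g (Term.var x)))

/-- Query classes. -/
inductive QClass : Type
  | aq
  | fullcq
  | cq
  | ucq

/-- A UCQ belongs to a query class. -/
def UCQInClass : QClass → UCQ → Prop
  | .aq, q => ∃ Q a, q = {({Atom.catom Q (Term.ind a)} : CQ)}
  | .fullcq, q => ∃ p : CQ, q = {p} ∧ CQIsFull p
  | .cq, q => ∃ p : CQ, q = {p}
  | .ucq, _ => True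

/-!
If an ontology `O` of `L` fits, take a countermodel of `O` for each negative example. As the
negative ABoxes share no individuals, their disjoint union is a model of `O` and `A⁻`, and it
still refutes each negative query. ALCI-concepts are invariant under bounded morphisms, so
entailment of a positive example transfers along any homomorphism of its ABox into a model of
`O`; hence every refutation candidate holds in that union and contains no negative query.

Conversely, saturate `A⁻` into a refutation candidate `C` closed under the rule. Describe `C`
by an ALC-ontology that gives every element a fresh "type" concept name `X_b`, `b ∈ ind(C)`,
in a way compatible with the assertions of `C`. In a model of it, reading off types maps each
positive ABox homomorphically into `C`, so saturation yields the positive query; and `C` itself,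
read as an interpretation, is a model refuting every negative query.
-/

namespace Concept

def bot : Concept := .neg .top

def or (C D : Concept) : Concept := .neg (.inter (.neg C) (.neg D))

def disj : List Concept → Concept
  | [] => bot
  | C :: l => or C (disj l)

theorem invFree_disj {l : List Concept} (h : ∀ C ∈ l, C.invFree) : (disj l).invFree := by
  induction l with
  | nil => simp [disj, bot, invFree]
  | cons C l ih => simp_all [disj, or, invFree]

theorem countFree_disj {l : List Concept} (h : ∀ C ∈ l, C.countFree) :
    (disj l).countFree := by
  induction l with
  | nil => simp [disj, bot, countFree]
  | cons C l ih => simp_all [disj, or, countFree]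

end Concept

namespace Interp

@[simp] theorem cSem_bot (I : Interp) : I.cSem .bot = ∅ := by
  simp [Concept.bot, cSem]

@[simp] theorem cSem_or (I : Interp) (C D : Concept) :
    I.cSem (.or C D) = I.cSem C ∪ I.cSem D := by
  simp [Concept.or, cSem, Set.compl_inter]

@[simp] theorem mem_cSem_disj (I : Interp) (l : List Concept) (d : I.Dom) :
    d ∈ I.cSem (.disj l) ↔ ∃ C ∈ l, d ∈ I.cSem C := by
  induction l with
  | nil => simp [Concept.disj]
  | cons C l ih => simp [Concept.disj, ih]

theorem IsModelOf.cSem_eq_empty {I : Interp} {O : Ontology} (hI : I.IsModelOf O) {C : Concept}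
    (hC : (C, .bot) ∈ O) : I.cSem C = ∅ :=
  Set.subset_empty_iff.1 ((hI _ hC).trans (cSem_bot I).subset)

end Interp

def Ontology.CountFree (O : Ontology) : Prop := ∀ ci ∈ O, ci.1.countFree ∧ ci.2.countFree

theorem OntologyInLang.countFree {L : DL} {O : Ontology} (h : OntologyInLang L O) :
    O.CountFree := by
  cases L with
  | alc => exact fun ci hci => ⟨(h ci hci).2.1, (h ci hci).2.2.2⟩
  | alci => exact h

theorem OntologyInLang.of_alc {O : Ontology} (h : OntologyInLang .alc O) (L : DL) :
    OntologyInLang L O := by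
  cases L with
  | alc => exact h
  | alci => exact h.countFree

/-! ## Bounded morphisms -/

namespace Interp

structure IsBoundedMorphism (I J : Interp) (f : I.Dom → J.Dom) : Prop where
  mem_concI_iff : ∀ P d, f d ∈ J.concI P ↔ d ∈ I.concI P
  map_roleI : ∀ r d e, (d, e) ∈ I.roleI r → (f d, f e) ∈ J.roleI r
  back_roleI : ∀ r d e', (f d, e') ∈ J.roleI r → ∃ e, (d, e) ∈ I.roleI r ∧ f e = e'
  back_roleI_inv : ∀ r d e', (e', f d) ∈ J.roleI r → ∃ e, (e, d) ∈ I.roleI r ∧ f e = e'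

namespace IsBoundedMorphism

variable {I J : Interp} {f : I.Dom → J.Dom}

theorem map_rSem (hf : IsBoundedMorphism I J f) (s : DLRole) {d e : I.Dom}
    (h : (d, e) ∈ I.rSem s) : (f d, f e) ∈ J.rSem s := by
  cases s with
  | name r => exact hf.map_roleI r d e h
  | inv r => exact hf.map_roleI r e d h

theorem back_rSem (hf : IsBoundedMorphism I J f) (s : DLRole) {d : I.Dom} {e' : J.Dom}
    (h : (f d, e') ∈ J.rSem s) : ∃ e, (d, e) ∈ I.rSem s ∧ f e = e' := by
  cases s with
  | name r => exact hf.back_roleI r d e' h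
  | inv r => exact hf.back_roleI_inv r d e' h

theorem mem_cSem_iff (hf : IsBoundedMorphism I J f) {C : Concept} (hC : C.countFree)
    (d : I.Dom) : f d ∈ J.cSem C ↔ d ∈ I.cSem C := by
  induction C generalizing d with
  | top => simp [cSem]
  | atom P => exact hf.mem_concI_iff P d
  | neg C ih => exact not_congr (ih hC d)
  | inter C D ihC ihD => exact and_congr (ihC hC.1 d) (ihD hC.2 d)
  | ex s C ih =>
    constructor
    · rintro ⟨e', hde', he'⟩
      obtain ⟨e, hde, rfl⟩ := hf.back_rSem s hde'
      exact ⟨e, hde, (ih hC e).1 he'⟩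
    · rintro ⟨e, hde, he⟩
      exact ⟨f e, hf.map_rSem s hde, (ih hC e).2 he⟩
  | atLeast => exact hC.elim
  | atMost => exact hC.elim

theorem isModelOf (hf : IsBoundedMorphism I J f) {O : Ontology} (hO : O.CountFree)
    (hJ : J.IsModelOf O) : I.IsModelOf O := fun ci hci d hd =>
  (hf.mem_cSem_iff (hO ci hci).2 d).1 (hJ ci hci ((hf.mem_cSem_iff (hO ci hci).1 d).2 hd))

end IsBoundedMorphism

theorem isModelOf_of_cover {J : Interp} {O : Ontology} (hO : O.CountFree)
    (hcover : ∀ y : J.Dom, ∃ (I : Interp) (f : I.Dom → J.Dom),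
      I.IsModelOf O ∧ IsBoundedMorphism I J f ∧ y ∈ Set.range f) :
    J.IsModelOf O := by
  intro ci hci y hy
  obtain ⟨I, f, hI, hf, d, rfl⟩ := hcover y
  exact (hf.mem_cSem_iff (hO ci hci).2 d).2
    (hI ci hci ((hf.mem_cSem_iff (hO ci hci).1 d).1 hy))

section disjUnion

variable {ι : Type} {J : ι → Interp} {pick : ℕ → ι}

theorem mk_mem_roleI_disjUnion_iff {r : ℕ} {i : ι} {d : (J i).Dom}
    {y : (disjUnion J pick).Dom} :
    ((⟨i, d⟩, y) ∈ (disjUnion J pick).roleI r ↔ ∃ e, (d, e) ∈ (J i).roleI r ∧ ⟨i, e⟩ = y) := by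
  constructor
  · rintro ⟨i', d', e, heq, hde⟩
    obtain ⟨h₁, rfl⟩ := Prod.mk.inj heq
    obtain ⟨rfl, hd⟩ := Sigma.mk.inj_iff.mp h₁
    cases eq_of_heq hd
    exact ⟨e, hde, rfl⟩
  · rintro ⟨e, hde, rfl⟩
    exact ⟨i, d, e, rfl, hde⟩

theorem mem_roleI_mk_disjUnion_iff {r : ℕ} {i : ι} {d : (J i).Dom}
    {y : (disjUnion J pick).Dom} :
    ((y, ⟨i, d⟩) ∈ (disjUnion J pick).roleI r ↔ ∃ e, (e, d) ∈ (J i).roleI r ∧ ⟨i, e⟩ = y) := by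
  constructor
  · rintro ⟨i', e, d', heq, hed⟩
    obtain ⟨rfl, h₂⟩ := Prod.mk.inj heq
    obtain ⟨rfl, hd⟩ := Sigma.mk.inj_iff.mp h₂
    cases eq_of_heq hd
    exact ⟨e, hed, rfl⟩
  · rintro ⟨e, hed, rfl⟩
    exact ⟨i, e, d, rfl, hed⟩

theorem isBoundedMorphism_sigmaMk (i : ι) :
    IsBoundedMorphism (J i) (disjUnion J pick) (Sigma.mk (β := fun i => (J i).Dom) i) where
  mem_concI_iff _ _ := Iff.rfl
  map_roleI _ _ _ h := mk_mem_roleI_disjUnion_iff.2 ⟨_, h, rfl⟩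
  back_roleI _ _ _ h := mk_mem_roleI_disjUnion_iff.1 h
  back_roleI_inv _ _ _ h := mem_roleI_mk_disjUnion_iff.1 h

theorem disjUnion_isModelOf {O : Ontology} (hO : O.CountFree) (hJ : ∀ i, (J i).IsModelOf O) :
    (disjUnion J pick).IsModelOf O :=
  isModelOf_of_cover hO fun ⟨i, d⟩ =>
    ⟨J i, Sigma.mk (β := fun i => (J i).Dom) i, hJ i, isBoundedMorphism_sigmaMk i, d, rfl⟩

end disjUnion

/-- `I × ℕ`, with the name `n` denoting `(ν n, n)`: this makes any naming `ν` injective, as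
the standard names assumption demands, and `Prod.fst` is a bounded morphism back onto `I`. -/
def prodNat (I : Interp) (ν : ℕ → I.Dom) : Interp where
  Dom := I.Dom × ℕ
  indI n := (ν n, n)
  indI_inj _ _ h := congrArg Prod.snd h
  concI P := {x | x.1 ∈ I.concI P}
  roleI r := {p | (p.1.1, p.2.1) ∈ I.roleI r}

theorem isBoundedMorphism_prodNat_fst (I : Interp) (ν : ℕ → I.Dom) :
    IsBoundedMorphism (I.prodNat ν) I Prod.fst where
  mem_concI_iff _ _ := Iff.rfl
  map_roleI _ _ _ h := h
  back_roleI _ _ e h := ⟨(e, 0), h, rfl⟩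
  back_roleI_inv _ _ e h := ⟨(e, 0), h, rfl⟩

end Interp

def AssertionRNs : Assertion → Finset ℕ
  | .conc _ _ => ∅
  | .role r _ _ => {r}

def ABoxRNs (A : ABox) : Finset ℕ := A.biUnion AssertionRNs

section ABox

variable {A B : ABox}

theorem mem_ABoxInds_of_conc {P a : ℕ} (h : .conc P a ∈ A) : a ∈ ABoxInds A :=
  Finset.mem_biUnion.2 ⟨_, h, by simp [AssertionInds]⟩

theorem left_mem_ABoxInds_of_role {r a b : ℕ} (h : .role r a b ∈ A) : a ∈ ABoxInds A :=
  Finset.mem_biUnion.2 ⟨_, h, by simp [AssertionInds]⟩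

theorem right_mem_ABoxInds_of_role {r a b : ℕ} (h : .role r a b ∈ A) : b ∈ ABoxInds A :=
  Finset.mem_biUnion.2 ⟨_, h, by simp [AssertionInds]⟩

theorem mem_ABoxCNs_of_conc {P a : ℕ} (h : .conc P a ∈ A) : P ∈ ABoxCNs A :=
  Finset.mem_biUnion.2 ⟨_, h, by simp [AssertionCNs]⟩

theorem mem_ABoxRNs_of_role {r a b : ℕ} (h : .role r a b ∈ A) : r ∈ ABoxRNs A :=
  Finset.mem_biUnion.2 ⟨_, h, by simp [AssertionRNs]⟩

theorem ABoxInds_mono (h : A ⊆ B) : ABoxInds A ⊆ ABoxInds B :=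
  Finset.biUnion_subset_biUnion_of_subset_left _ h

theorem ABoxInds_insert_conc (P a : ℕ) :
    ABoxInds (insert (.conc P a) A) = insert a (ABoxInds A) := by
  rw [ABoxInds, Finset.biUnion_insert, AssertionInds, ← Finset.insert_eq]
  rfl

theorem ABoxHom.mem_ABoxInds {h : ℕ → ℕ} (hh : ABoxHom h A B) {a : ℕ} (ha : a ∈ ABoxInds A) :
    h a ∈ ABoxInds B := by
  obtain ⟨α, hα, haα⟩ := Finset.mem_biUnion.1 ha
  cases α with
  | conc P b =>
    obtain rfl : a = b := by simpa [AssertionInds] using haα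
    exact mem_ABoxInds_of_conc (hh.1 P a hα)
  | role r b c =>
    obtain rfl | rfl : a = b ∨ a = c := by simpa [AssertionInds] using haα
    · exact left_mem_ABoxInds_of_role (hh.2 r a c hα)
    · exact right_mem_ABoxInds_of_role (hh.2 r b a hα)

theorem PairwiseDisjInds.mono {S T : Finset ABox} (hS : PairwiseDisjInds S) (h : T ⊆ S) :
    PairwiseDisjInds T := fun A hA B hB => hS A (h hA) B (h hB)

theorem PairwiseDisjInds.exists_pick {S : Finset ABox} (hS : PairwiseDisjInds S) (B₀ : S) :
    ∃ pick : ℕ → S, ∀ B : S, ∀ n ∈ ABoxInds B.1, pick n = B := by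
  classical
  refine ⟨fun n => if h : ∃ B : S, n ∈ ABoxInds B.1 then h.choose else B₀, fun B n hn => ?_⟩
  have hex : ∃ B : S, n ∈ ABoxInds B.1 := ⟨B, hn⟩
  dsimp only
  rw [dif_pos hex]
  by_contra hne
  exact Finset.disjoint_left.1
    (hS _ hex.choose.2 _ B.2 (Subtype.coe_ne_coe.2 hne)) hex.choose_spec hn

end ABox

namespace Interp

variable {I : Interp}

theorem SatABox.mono {A B : ABox} (hB : I.SatABox B) (h : A ⊆ B) : I.SatABox A :=
  fun α hα => hB α (h hα)

theorem satABox_negUnionAQ {En : Finset AQEx} (h : ∀ e ∈ En, I.SatABox e.1) :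
    I.SatABox (NegUnionAQ En) := fun α hα => by
  obtain ⟨e, he, hα⟩ := Finset.mem_sup.1 hα
  exact h e he α hα

theorem SatABox.aboxIHom_comp {A B : ABox} {h : ℕ → ℕ} (hB : I.SatABox B)
    (hh : ABoxHom h A B) : ABoxIHom I (I.indI ∘ h) A :=
  ⟨fun P a ha => hB _ (hh.1 P a ha), fun r a b hab => hB _ (hh.2 r a b hab)⟩

theorem satABox_prodNat {ν : ℕ → I.Dom} {A : ABox} (hν : ABoxIHom I ν A) :
    (I.prodNat ν).SatABox A := by
  intro α hα
  cases α with
  | conc P a => exact hν.1 P a hα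
  | role r a b => exact hν.2 r a b hα

theorem disjUnion_satABox {ι : Type} {J : ι → Interp} {pick : ℕ → ι} {i : ι} {A : ABox}
    (hpick : ∀ n ∈ ABoxInds A, pick n = i) (hA : (J i).SatABox A) :
    (disjUnion J pick).SatABox A := by
  intro α hα
  cases α with
  | conc P a =>
    show (J (pick a)).indI a ∈ (J (pick a)).concI P
    rw [hpick a (mem_ABoxInds_of_conc hα)]
    exact hA _ hα
  | role r a b =>
    show ((⟨pick a, (J (pick a)).indI a⟩ : (disjUnion J pick).Dom),
      ⟨pick b, (J (pick b)).indI b⟩) ∈ (disjUnion J pick).roleI r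
    rw [hpick a (left_mem_ABoxInds_of_role hα), hpick b (right_mem_ABoxInds_of_role hα)]
    exact ⟨i, _, _, rfl, hA _ hα⟩

end Interp

theorem EntailsAQ.mem_concI_of_aboxIHom {A : ABox} {O : Ontology} {Q a : ℕ}
    (hE : EntailsAQ A O Q a) (hO : O.CountFree) {I : Interp} (hI : I.IsModelOf O)
    {ν : ℕ → I.Dom} (hν : ABoxIHom I ν A) : ν a ∈ I.concI Q :=
  hE (I.prodNat ν) ((I.isBoundedMorphism_prodNat_fst ν).isModelOf hO hI)
    (Interp.satABox_prodNat hν)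

/-! ## Refutation candidates -/

def IsSaturatedAQ (Ep : Finset AQEx) (C : ABox) : Prop :=
  ∀ {A : ABox} {Q a : ℕ} {h : ℕ → ℕ}, (A, Q, a) ∈ Ep → ABoxHom h A C → .conc Q (h a) ∈ C

def refCandBound (Ep : Finset AQEx) (base : ABox) : ABox :=
  base ∪ ((Ep.image fun e => e.2.1) ×ˢ ABoxInds base).image fun p => .conc p.1 p.2

namespace RefCandAQ

variable {Ep : Finset AQEx} {base C : ABox}

theorem base_subset (hC : RefCandAQ Ep base C) : base ⊆ C := by
  induction hC with
  | base => exact subset_rfl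
  | step _ _ _ ih => exact ih.trans (Finset.subset_insert _ _)

theorem ABoxInds_subset (hwf : ∀ e ∈ Ep, e.2.2 ∈ ABoxInds e.1) (hC : RefCandAQ Ep base C) :
    ABoxInds C ⊆ ABoxInds base := by
  induction hC with
  | base => exact subset_rfl
  | step _ hmem hhom ih =>
    rw [ABoxInds_insert_conc]
    exact Finset.insert_subset (ih (hhom.mem_ABoxInds (hwf _ hmem))) ih

theorem subset_refCandBound (hwf : ∀ e ∈ Ep, e.2.2 ∈ ABoxInds e.1)
    (hC : RefCandAQ Ep base C) : C ⊆ refCandBound Ep base := by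
  induction hC with
  | base => exact Finset.subset_union_left
  | step hC hmem hhom ih =>
    refine Finset.insert_subset (Finset.mem_union_right _ (Finset.mem_image.2 ⟨(_, _), ?_, rfl⟩)) ih
    exact Finset.mem_product.2
      ⟨Finset.mem_image_of_mem _ hmem, ABoxInds_subset hwf hC (hhom.mem_ABoxInds (hwf _ hmem))⟩

theorem satABox {O : Ontology} (hO : O.CountFree)
    (hEp : ∀ e ∈ Ep, EntailsAQ e.1 O e.2.1 e.2.2) {I : Interp} (hI : I.IsModelOf O)
    (hbase : I.SatABox base) (hC : RefCandAQ Ep base C) : I.SatABox C := by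
  induction hC with
  | base => exact hbase
  | step _ hmem hhom ih =>
    refine Finset.forall_mem_insert _ _ _ |>.2 ⟨?_, ih⟩
    exact (hEp _ hmem).mem_concI_of_aboxIHom hO hI (ih.aboxIHom_comp hhom)

end RefCandAQ

/-- A refutation candidate of maximal size is saturated, since the rule only adds
assertions from the finite `refCandBound`. -/
theorem exists_refCandAQ_isSaturatedAQ (Ep : Finset AQEx) (base : ABox)
    (hwf : ∀ e ∈ Ep, e.2.2 ∈ ABoxInds e.1) :
    ∃ C, RefCandAQ Ep base C ∧ IsSaturatedAQ Ep C := by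
  classical
  let T := (refCandBound Ep base).powerset.filter (RefCandAQ Ep base)
  have hT {C : ABox} (hC : RefCandAQ Ep base C) : C ∈ T :=
    Finset.mem_filter.2 ⟨Finset.mem_powerset.2 (hC.subset_refCandBound hwf), hC⟩
  obtain ⟨C, hCT, hmax⟩ := T.exists_max_image Finset.card ⟨base, hT .base⟩
  have hC : RefCandAQ Ep base C := (Finset.mem_filter.1 hCT).2
  refine ⟨C, hC, fun hmem hhom => ?_⟩
  by_contra hnot
  have := hmax _ (hT (hC.step hmem hhom))
  rw [Finset.card_insert_of_notMem hnot] at this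
  omega

/-- The disjoint union of countermodels of the negative examples, one per ABox and the one of
`e₀` for the ABox of `e₀`, refutes `e₀` on all of `A⁻`. -/
theorem exists_model_negUnionAQ_not_mem {En : Finset AQEx} {O : Ontology} (hO : O.CountFree)
    (hdisj : PairwiseDisjInds (En.image Prod.fst))
    (hneg : ∀ e ∈ En, ¬ EntailsAQ e.1 O e.2.1 e.2.2) {e₀ : AQEx} (he₀ : e₀ ∈ En)
    (ha₀ : e₀.2.2 ∈ ABoxInds e₀.1) :
    ∃ I : Interp, I.IsModelOf O ∧ I.SatABox (NegUnionAQ En) ∧ I.indI e₀.2.2 ∉ I.concI e₀.2.1 := by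
  let S := En.image Prod.fst
  have hcounter (B : S) : ∃ I : Interp, I.IsModelOf O ∧ I.SatABox B.1 ∧
      (B.1 = e₀.1 → I.indI e₀.2.2 ∉ I.concI e₀.2.1) := by
    obtain ⟨e, he, heB, he₀B⟩ : ∃ e ∈ En, e.1 = B.1 ∧ (B.1 = e₀.1 → e = e₀) := by
      by_cases hB : B.1 = e₀.1
      · exact ⟨e₀, he₀, hB.symm, fun _ => rfl⟩
      · obtain ⟨e, he, heB⟩ := Finset.mem_image.1 B.2
        exact ⟨e, he, heB, fun h => (hB h).elim⟩
    have := hneg e he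
    simp only [EntailsAQ, not_forall] at this
    obtain ⟨I, hIO, hIe, hQ⟩ := this
    exact ⟨I, hIO, heB ▸ hIe, fun hB => he₀B hB ▸ hQ⟩
  choose J hJO hJB hJe₀ using hcounter
  let B₀ : S := ⟨e₀.1, Finset.mem_image_of_mem _ he₀⟩
  obtain ⟨pick, hpick⟩ := hdisj.exists_pick B₀
  refine ⟨Interp.disjUnion J pick, Interp.disjUnion_isModelOf hO hJO,
    Interp.satABox_negUnionAQ fun e he => ?_, ?_⟩
  · let B : S := ⟨e.1, Finset.mem_image_of_mem _ he⟩
    exact Interp.disjUnion_satABox (hpick B) (hJB B)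
  · show (J (pick e₀.2.2)).indI e₀.2.2 ∉ (J (pick e₀.2.2)).concI e₀.2.1
    rw [hpick B₀ _ ha₀]
    exact hJe₀ B₀ rfl

/-! ## The ontology of a saturated refutation candidate -/

/-- With `M` above all concept names in use, the atom `M + b` marks the elements of type
`b ∈ ind(C)`: every element has a type, an element of type `b` may not carry a concept name
of `N` or an `R`-edge to type `c` that `C` does not assert for `b`, and it carries every
concept name that `C` asserts for `b`. -/
noncomputable def typeOntology (C : ABox) (M : ℕ) (N R : Finset ℕ) : Ontology :=
  insert (.top, .disj ((ABoxInds C).toList.map fun b => .atom (M + b)))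
    ((((ABoxInds C ×ˢ N).filter fun p => .conc p.2 p.1 ∉ C).image
        fun p => (.inter (.atom (M + p.1)) (.atom p.2), .bot)) ∪
      (((ABoxInds C ×ˢ ABoxInds C ×ˢ R).filter fun p => .role p.2.2 p.1 p.2.1 ∉ C).image
        fun p => (.inter (.atom (M + p.1)) (.ex (.name p.2.2) (.atom (M + p.2.1))), .bot)) ∪
      (((ABoxInds C ×ˢ ABoxCNs C).filter fun p => .conc p.2 p.1 ∈ C).image
        fun p => (.atom (M + p.1), .atom p.2)))

def projInds (C : ABox) (b₀ x : ℕ) : ℕ := if x ∈ ABoxInds C then x else b₀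

def typeModel (C : ABox) (M b₀ : ℕ) : Interp where
  Dom := ℕ
  indI := id
  indI_inj := Function.injective_id
  concI P := if P < M then {x | .conc P (projInds C b₀ x) ∈ C} else {x | M + projInds C b₀ x = P}
  roleI r := {p | .role r (projInds C b₀ p.1) (projInds C b₀ p.2) ∈ C}

section typeOntology

variable {C : ABox} {M : ℕ} {N R : Finset ℕ}

theorem typeOntology_inLang (L : DL) : OntologyInLang L (typeOntology C M N R) := by
  refine OntologyInLang.of_alc (fun ci hci => ?_) L
  simp only [typeOntology, Finset.mem_insert, Finset.mem_union, Finset.mem_image] at hci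
  rcases hci with rfl | ⟨⟨p, -, rfl⟩ | ⟨p, -, rfl⟩⟩ | ⟨p, -, rfl⟩ <;>
    simp [Concept.invFree, Concept.countFree, Concept.bot, Concept.invFree_disj,
      Concept.countFree_disj]

theorem exists_aboxHom_of_isModelOf_typeOntology {J : Interp} {A : ABox}
    (hJ : J.IsModelOf (typeOntology C M N R)) (hA : J.SatABox A) (hN : ABoxCNs A ⊆ N)
    (hR : ABoxRNs A ⊆ R) :
    ∃ g : ℕ → ℕ, ABoxHom g A C ∧ ∀ n, g n ∈ ABoxInds C ∧ J.indI n ∈ J.concI (M + g n) := by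
  have htype (d : J.Dom) : ∃ b ∈ ABoxInds C, d ∈ J.concI (M + b) := by
    have := hJ _ (Finset.mem_insert_self _ _) (Set.mem_univ d)
    simpa [Interp.cSem] using this
  choose g hgC hgM using fun n => htype (J.indI n)
  refine ⟨g, ⟨fun P a ha => ?_, fun r a b hab => ?_⟩, fun n => ⟨hgC n, hgM n⟩⟩
  · by_contra hnot
    have hci : (.inter (.atom (M + g a)) (.atom P), .bot) ∈ typeOntology C M N R := by
      simp [typeOntology, hgC, hnot, hN (mem_ABoxCNs_of_conc ha)]
    exact (hJ.cSem_eq_empty hci).subset ⟨hgM a, hA _ ha⟩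
  · by_contra hnot
    have hci : (.inter (.atom (M + g a)) (.ex (.name r) (.atom (M + g b))), .bot) ∈
        typeOntology C M N R := by
      simp [typeOntology, hgC, hnot, hR (mem_ABoxRNs_of_role hab)]
    exact (hJ.cSem_eq_empty hci).subset ⟨hgM a, _, hA _ hab, hgM b⟩

theorem entailsAQ_typeOntology {Ep : Finset AQEx} (hC : IsSaturatedAQ Ep C) {A : ABox}
    {Q a : ℕ} (he : (A, Q, a) ∈ Ep) (hN : ABoxCNs A ⊆ N) (hR : ABoxRNs A ⊆ R) :
    EntailsAQ A (typeOntology C M N R) Q a := by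
  intro J hJ hA
  obtain ⟨g, hg, hgJ⟩ := exists_aboxHom_of_isModelOf_typeOntology hJ hA hN hR
  have hQ : .conc Q (g a) ∈ C := hC he hg
  refine hJ (.atom (M + g a), .atom Q) ?_ (hgJ a).2
  simp [typeOntology, hQ, (hgJ a).1, mem_ABoxCNs_of_conc hQ]

section typeModel

variable {b₀ : ℕ}

theorem projInds_of_mem {x : ℕ} (hx : x ∈ ABoxInds C) : projInds C b₀ x = x := if_pos hx

theorem projInds_mem (hb₀ : b₀ ∈ ABoxInds C) (x : ℕ) : projInds C b₀ x ∈ ABoxInds C := by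
  unfold projInds
  split_ifs with hx
  exacts [hx, hb₀]

theorem mem_typeModel_concI_of_lt {P : ℕ} (hP : P < M) (x : (typeModel C M b₀).Dom) :
    x ∈ (typeModel C M b₀).concI P ↔ .conc P (projInds C b₀ x) ∈ C := by
  simp only [typeModel, if_pos hP]
  rfl

theorem mem_typeModel_concI_add (b : ℕ) (x : (typeModel C M b₀).Dom) :
    x ∈ (typeModel C M b₀).concI (M + b) ↔ projInds C b₀ x = b := by
  simp only [typeModel, if_neg (Nat.not_lt.2 (Nat.le_add_right M b))]
  exact Nat.add_left_cancel_iff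

theorem typeModel_satABox (hCM : ∀ P ∈ ABoxCNs C, P < M) : (typeModel C M b₀).SatABox C := by
  intro α hα
  cases α with
  | conc P a =>
    refine (mem_typeModel_concI_of_lt (hCM P (mem_ABoxCNs_of_conc hα)) a).2 ?_
    rwa [projInds_of_mem (mem_ABoxInds_of_conc hα)]
  | role r a b =>
    show .role r (projInds C b₀ a) (projInds C b₀ b) ∈ C
    rwa [projInds_of_mem (left_mem_ABoxInds_of_role hα),
      projInds_of_mem (right_mem_ABoxInds_of_role hα)]

theorem typeModel_isModelOf (hb₀ : b₀ ∈ ABoxInds C) (hCM : ∀ P ∈ ABoxCNs C, P < M)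
    (hNM : ∀ P ∈ N, P < M) : (typeModel C M b₀).IsModelOf (typeOntology C M N R) := by
  intro ci hci
  simp only [typeOntology, Finset.mem_insert, Finset.mem_union, Finset.mem_image,
    Finset.mem_filter, Finset.mem_product] at hci
  rcases hci with rfl | ⟨⟨⟨b, P⟩, ⟨⟨-, hP⟩, hnot⟩, rfl⟩ | ⟨⟨b, c, r⟩, ⟨-, hnot⟩, rfl⟩⟩ |
      ⟨⟨b, Q⟩, ⟨⟨-, hQ⟩, hin⟩, rfl⟩
  · intro x _
    simpa [Interp.cSem] using ⟨_, projInds_mem hb₀ x, (mem_typeModel_concI_add _ x).2 rfl⟩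
  · rintro x ⟨hxb, hxP⟩
    dsimp only [Interp.cSem] at hxb hxP
    rw [mem_typeModel_concI_add] at hxb
    rw [mem_typeModel_concI_of_lt (hNM P hP), hxb] at hxP
    exact (hnot hxP).elim
  · rintro x ⟨hxb, y, hxy, hyc⟩
    dsimp only [Interp.cSem] at hxb hyc
    rw [mem_typeModel_concI_add] at hxb hyc
    have : .role r (projInds C b₀ x) (projInds C b₀ y) ∈ C := hxy
    rw [hxb, hyc] at this
    exact (hnot this).elim
  · intro x hxb
    dsimp only [Interp.cSem] at hxb ⊢
    rw [mem_typeModel_concI_add] at hxb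
    rw [mem_typeModel_concI_of_lt (hCM Q hQ), hxb]
    exact hin

end typeModel

theorem not_entailsAQ_typeOntology {A : ABox} {Q a : ℕ} (ha : a ∈ ABoxInds C) (hAC : A ⊆ C)
    (hQ : .conc Q a ∉ C) (hQM : Q < M) (hCM : ∀ P ∈ ABoxCNs C, P < M) (hNM : ∀ P ∈ N, P < M) :
    ¬ EntailsAQ A (typeOntology C M N R) Q a := fun hE => hQ <| by
  have := hE (typeModel C M a) (typeModel_isModelOf ha hCM hNM)
    ((typeModel_satABox hCM).mono hAC)
  rw [mem_typeModel_concI_of_lt hQM] at this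
  change .conc Q (projInds C a a) ∈ C at this
  rwa [projInds_of_mem ha] at this

end typeOntology

theorem exists_fitsAQ_of_forall_refCandAQ_not_mem (L : DL) {Ep En : Finset AQEx}
    (hwf : ∀ e ∈ Ep ∪ En, e.2.2 ∈ ABoxInds e.1)
    (hno : ∀ C, RefCandAQ Ep (NegUnionAQ En) C → ∀ e ∈ En, .conc e.2.1 e.2.2 ∉ C) :
    ∃ O : Ontology, OntologyInLang L O ∧ FitsAQ O Ep En := by
  obtain ⟨C, hC, hCsat⟩ := exists_refCandAQ_isSaturatedAQ Ep (NegUnionAQ En)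
    fun e he => hwf e (Finset.mem_union_left _ he)
  let N := Ep.biUnion fun e => ABoxCNs e.1
  let R := Ep.biUnion fun e => ABoxRNs e.1
  obtain ⟨M, hM⟩ : ∃ M, ∀ P ∈ ABoxCNs C ∪ N ∪ En.image (·.2.1), P < M :=
    ⟨_, fun P hP => Nat.lt_succ_of_le (Finset.le_sup (f := id) hP)⟩
  refine ⟨typeOntology C M N R, typeOntology_inLang L, fun e he => ?_, fun e he => ?_⟩
  · exact entailsAQ_typeOntology hCsat he (Finset.subset_biUnion_of_mem (fun e => ABoxCNs e.1) he)
      (Finset.subset_biUnion_of_mem (fun e => ABoxRNs e.1) he)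
  · have hAC : e.1 ⊆ C := (Finset.le_sup he).trans hC.base_subset
    exact not_entailsAQ_typeOntology (ABoxInds_mono hAC (hwf e (Finset.mem_union_right _ he)))
      hAC (hno C hC e he) (hM _ (Finset.mem_union_right _ (Finset.mem_image_of_mem _ he)))
      (fun P hP => hM P (Finset.mem_union_left _ (Finset.mem_union_left _ hP)))
      (fun P hP => hM P (Finset.mem_union_left _ (Finset.mem_union_right _ hP)))

/-- A collection of labeled ABox-AQ examples admits no fitting
`L`-ontology iff some refutation candidate contains the query of a negative
example. -/
theorem aq_fitting_refutation_candidates (L : DL) (Ep En : Finset AQEx)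
    (hdisj : PairwiseDisjInds ((Ep ∪ En).image Prod.fst))
    (hwf : ∀ e ∈ Ep ∪ En, e.2.2 ∈ ABoxInds e.1) :
    (¬ ∃ O : Ontology, OntologyInLang L O ∧ FitsAQ O Ep En) ↔
      (∃ C : ABox, RefCandAQ Ep (NegUnionAQ En) C ∧
        ∃ e ∈ En, Assertion.conc e.2.1 e.2.2 ∈ C) := by
  constructor
  · intro hno
    by_contra! hcand
    exact hno (exists_fitsAQ_of_forall_refCandAQ_not_mem L hwf hcand)
  · rintro ⟨C, hC, e, he, heC⟩ ⟨O, hL, hpos, hneg⟩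
    obtain ⟨I, hIO, hIA, hIe⟩ := exists_model_negUnionAQ_not_mem hL.countFree
      (hdisj.mono (Finset.image_subset_image Finset.subset_union_right)) hneg he
      (hwf e (Finset.mem_union_right _ he))
    exact hIe (hC.satABox hL.countFree hpos hIO hIA _ heC)

end DLFit
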